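/- arXiv:1808.01783 — 2 statements merged into one kernel-verified Lean document; each statement's English description precedes it below -/
import Mathlib

section
/- The forward solution of E_t^{1,1}(·;f) is uniquely determined for Lebesgue-almost every t > 0; that is, the set of t > 0 for which there exist minimizers u_0, u_1 of E_t^{1,1}(·;f) with Au_0 ≠ Au_1 has Lebesgue measure zero. -/
/-!
Two minimizers with the same value of `J` have the same residual `A u - f`: otherwise their
midpoint, which by convexity has no larger `J`, would have a strictly smaller residual by strict
convexity of the Hilbert norm. Comparing the energies at parameters `s < t` shows that `J` of a
minimizer is antitone in the parameter. So at each `t` where the forward solution is not unique,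
the values of `J` on minimizers leave an open gap, gaps at distinct `t` are disjoint, and hence
there are only countably many such `t`.
-/

open Filter Topology Set
open scoped ENNReal RealInnerProductSpace

noncomputable section

/-- The variational energy `E_t^{α,β}(u; f)`. -/
def En {X : Type*} [NormedAddCommGroup X] [NormedSpace ℝ X]
    {H : Type*} [NormedAddCommGroup H] [InnerProductSpace ℝ H]
    (A : X →L[ℝ] H) (J : X → ℝ≥0∞) (f : H) (t α β : ℝ) (u : X) : ℝ≥0∞ :=
  ENNReal.ofReal ((1 / α) * ‖A u - f‖ ^ α) + ENNReal.ofReal (t / β) * J u ^ β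

/-- `u` is a minimizer of `E_t^{α,β}(·; f)`. -/
def IsMinimizer {X : Type*} [NormedAddCommGroup X] [NormedSpace ℝ X]
    {H : Type*} [NormedAddCommGroup H] [InnerProductSpace ℝ H]
    (A : X →L[ℝ] H) (J : X → ℝ≥0∞) (f : H) (t α β : ℝ) (u : X) : Prop :=
  ∀ v, En A J f t α β u ≤ En A J f t α β v

/-- `J` is proper. -/
def IsProperFn {X : Type*} (J : X → ℝ≥0∞) : Prop := ∃ u, J u ≠ ⊤

/-- `J` is absolutely one-homogeneous. -/
def AbsOneHom {X : Type*} [NormedAddCommGroup X] [NormedSpace ℝ X] (J : X → ℝ≥0∞) : Prop :=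
  ∀ (c : ℝ) (u : X), J (c • u) = ENNReal.ofReal |c| * J u

/-- `J` is convex. -/
def EConvexFn {X : Type*} [NormedAddCommGroup X] [NormedSpace ℝ X] (J : X → ℝ≥0∞) : Prop :=
  ∀ (u v : X) (a b : ℝ), 0 ≤ a → 0 ≤ b → a + b = 1 →
    J (a • u + b • v) ≤ ENNReal.ofReal a * J u + ENNReal.ofReal b * J v

/-- The subdifferential of `J` at `u`; dual elements are represented as `X →L[ℝ] ℝ`. -/
def subdiff {X : Type*} [NormedAddCommGroup X] [NormedSpace ℝ X]
    (J : X → ℝ≥0∞) (u : X) : Set (X →L[ℝ] ℝ) :=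
  {p | ∀ v, (J u : EReal) + ((p (v - u) : ℝ) : EReal) ≤ (J v : EReal)}

/-- The adjoint `A* q` as an element of the dual of `X`. -/
def Astar {X : Type*} [NormedAddCommGroup X] [NormedSpace ℝ X]
    {H : Type*} [NormedAddCommGroup H] [InnerProductSpace ℝ H]
    (A : X →L[ℝ] H) (q : H) : X →L[ℝ] ℝ :=
  (innerSL ℝ q).comp A

/-- The set of norms `‖q‖` of source elements `q` for solutions of `Au = f`. -/
def SourceNorms {X : Type*} [NormedAddCommGroup X] [NormedSpace ℝ X]
    {H : Type*} [NormedAddCommGroup H] [InnerProductSpace ℝ H]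
    (A : X →L[ℝ] H) (J : X → ℝ≥0∞) (f : H) : Set ℝ :=
  {r | ∃ (u : X) (q : H), J u ≠ ⊤ ∧ A u = f ∧ Astar A q ∈ subdiff J u ∧ r = ‖q‖}

/-- The weak-star topology on the dual `Y →L[ℝ] ℝ` of `Y`. -/
def weakStar (Y : Type*) [NormedAddCommGroup Y] [NormedSpace ℝ Y] :
    TopologicalSpace (Y →L[ℝ] ℝ) :=
  TopologicalSpace.induced (fun (u : Y →L[ℝ] ℝ) (y : Y) => u y) inferInstance

/-- `J` is lower semicontinuous with respect to the weak-star topology. -/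
def WeakStarLSC {Y : Type*} [NormedAddCommGroup Y] [NormedSpace ℝ Y]
    (J : (Y →L[ℝ] ℝ) → ℝ≥0∞) : Prop :=
  @LowerSemicontinuous _ _ (weakStar Y) _ J

/-- `A` is weak-star-to-weak continuous. -/
def WeakStarToWeakCont {Y : Type*} [NormedAddCommGroup Y] [NormedSpace ℝ Y]
    {H : Type*} [NormedAddCommGroup H] [InnerProductSpace ℝ H]
    (A : (Y →L[ℝ] ℝ) →L[ℝ] H) : Prop :=
  ∀ h : H, @Continuous _ _ (weakStar Y) _ (fun u => (⟪A u, h⟫ : ℝ))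

/-- Assumption 1: `‖A ·‖` is a norm on `N(J)` equivalent to the restriction of `‖·‖`. -/
def ANormEquiv {X : Type*} [NormedAddCommGroup X] [NormedSpace ℝ X]
    {H : Type*} [NormedAddCommGroup H] [InnerProductSpace ℝ H]
    (A : X →L[ℝ] H) (J : X → ℝ≥0∞) : Prop :=
  ∃ c > (0:ℝ), ∃ C > (0:ℝ), ∀ u, J u = 0 → c * ‖u‖ ≤ ‖A u‖ ∧ ‖A u‖ ≤ C * ‖u‖

/-- `PA` is the `A`-orthogonal projection onto `N(J)`. -/
def IsAProj {X : Type*} [NormedAddCommGroup X] [NormedSpace ℝ X]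
    {H : Type*} [NormedAddCommGroup H] [InnerProductSpace ℝ H]
    (A : X →L[ℝ] H) (J : X → ℝ≥0∞) (PA : H → X) : Prop :=
  ∀ g : H, J (PA g) = 0 ∧ (∀ u, J u = 0 → ‖A (PA g) - g‖ ≤ ‖A u - g‖) ∧
    (∀ u, J u = 0 → ‖A u - g‖ ≤ ‖A (PA g) - g‖ → u = PA g)

/-- Assumption 2: generalized Poincaré inequality. -/
def PoincareIneq {X : Type*} [NormedAddCommGroup X] [NormedSpace ℝ X]
    {H : Type*} [NormedAddCommGroup H] [InnerProductSpace ℝ H]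
    (A : X →L[ℝ] H) (J : X → ℝ≥0∞) (PA : H → X) : Prop :=
  ∃ C > (0:ℝ), ∀ u, ENNReal.ofReal ‖u - PA (A u)‖ ≤ ENNReal.ofReal C * J u

lemma EConvexFn.apply_midpoint_le_max {X : Type*} [NormedAddCommGroup X] [NormedSpace ℝ X]
    {J : X → ℝ≥0∞} (hJ : EConvexFn J) (u v : X) : J (midpoint ℝ u v) ≤ max (J u) (J v) := by
  have half : ENNReal.ofReal 2⁻¹ + ENNReal.ofReal 2⁻¹ = 1 := by
    rw [← ENNReal.ofReal_add (by norm_num) (by norm_num)]; norm_num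
  calc J (midpoint ℝ u v) = J ((2:ℝ)⁻¹ • u + (2:ℝ)⁻¹ • v) := by
        rw [midpoint_eq_smul_add, invOf_eq_inv, smul_add]
    _ ≤ ENNReal.ofReal 2⁻¹ * J u + ENNReal.ofReal 2⁻¹ * J v :=
        hJ u v _ _ (by norm_num) (by norm_num) (by norm_num)
    _ ≤ ENNReal.ofReal 2⁻¹ * max (J u) (J v) + ENNReal.ofReal 2⁻¹ * max (J u) (J v) := by
        gcongr
        exacts [le_max_left _ _, le_max_right _ _]
    _ = max (J u) (J v) := by rw [← add_mul, half, one_mul]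

lemma norm_midpoint_lt_of_ne {E : Type*} [NormedAddCommGroup E] [NormedSpace ℝ E]
    [StrictConvexSpace ℝ E] {x y : E} (h : ‖x‖ = ‖y‖) (hne : x ≠ y) :
    ‖midpoint ℝ x y‖ < ‖x‖ := by
  rw [midpoint_eq_smul_add, invOf_eq_inv, ← one_div]
  exact (norm_midpoint_lt_iff h).mpr hne

theorem countable_setOf_nontrivial_of_antitone {ι α : Type*} [LinearOrder ι] [LinearOrder α]
    [TopologicalSpace α] [OrderTopology α] [DenselyOrdered α] [TopologicalSpace.SeparableSpace α]
    {s : Set ι} (j : ι → Set α)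
    (hj : ∀ a ∈ s, ∀ b ∈ s, a < b → ∀ x ∈ j a, ∀ y ∈ j b, y ≤ x) :
    {t ∈ s | (j t).Nontrivial}.Countable := by
  let gaps : ι → Set α := fun t => ⋃ x ∈ j t, ⋃ y ∈ j t, Ioo x y
  have disj : ∀ a ∈ s, ∀ b ∈ s, a < b → Disjoint (gaps a) (gaps b) := by
    intro a ha b hb hab
    refine Set.disjoint_left.mpr fun z hza hzb => ?_
    simp only [gaps, Set.mem_iUnion, Set.mem_Ioo] at hza hzb
    obtain ⟨x, hx, -, -, hxz, -⟩ := hza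
    obtain ⟨-, -, y, hy, -, hzy⟩ := hzb
    exact (hxz.trans hzy).not_ge (hj a ha b hb hab x hx y hy)
  refine Set.PairwiseDisjoint.countable_of_isOpen (s := gaps) ?_ ?_ ?_
  · intro a ha b hb hab
    rcases hab.lt_or_gt with h | h
    exacts [disj a ha.1 b hb.1 h, (disj b hb.1 a ha.1 h).symm]
  · exact fun t _ => isOpen_biUnion fun _ _ => isOpen_biUnion fun _ _ => isOpen_Ioo
  · rintro t ⟨-, x, hx, y, hy, hxy⟩
    rcases hxy.lt_or_gt with h | h
    · obtain ⟨z, hz⟩ := exists_between h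
      exact ⟨z, Set.mem_biUnion hx (Set.mem_biUnion hy hz)⟩
    · obtain ⟨z, hz⟩ := exists_between h
      exact ⟨z, Set.mem_biUnion hy (Set.mem_biUnion hx hz)⟩

section Minimizers

variable {X : Type*} [NormedAddCommGroup X] [NormedSpace ℝ X]
  {H : Type*} [NormedAddCommGroup H] [InnerProductSpace ℝ H]
  {A : X →L[ℝ] H} {J : X → ℝ≥0∞} {f : H} {s t : ℝ} {u v : X}

@[simp]
lemma En_one_one (A : X →L[ℝ] H) (J : X → ℝ≥0∞) (f : H) (t : ℝ) (u : X) :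
    En A J f t 1 1 u = ENNReal.ofReal ‖A u - f‖ + ENNReal.ofReal t * J u := by
  simp [En]

lemma En_one_one_ne_top (hJ : J u ≠ ⊤) : En A J f t 1 1 u ≠ ⊤ := by
  simp [ENNReal.mul_ne_top, hJ]

lemma toReal_En_one_one (hJ : J u ≠ ⊤) :
    (En A J f t 1 1 u).toReal = ‖A u - f‖ + max t 0 * (J u).toReal := by
  rw [En_one_one, ENNReal.toReal_add ENNReal.ofReal_ne_top (ENNReal.mul_ne_top
    ENNReal.ofReal_ne_top hJ), ENNReal.toReal_mul, ENNReal.toReal_ofReal (norm_nonneg _),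
    ENNReal.toReal_ofReal']

namespace IsMinimizer

lemma J_ne_top_of_ne_top (hu : IsMinimizer A J f t 1 1 u) (ht : 0 < t) (hv : J v ≠ ⊤) :
    J u ≠ ⊤ := by
  have hle : ENNReal.ofReal t * J u ≤ En A J f t 1 1 v :=
    calc ENNReal.ofReal t * J u ≤ En A J f t 1 1 u := by rw [En_one_one]; exact le_add_self
      _ ≤ En A J f t 1 1 v := hu v
  intro h
  rw [h, ENNReal.mul_top (ENNReal.ofReal_pos.mpr ht).ne', top_le_iff] at hle
  exact En_one_one_ne_top hv hle

lemma J_ne_top (hu : IsMinimizer A J f t 1 1 u) (ht : 0 < t) (hproper : IsProperFn J) :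
    J u ≠ ⊤ :=
  let ⟨_, hv⟩ := hproper
  hu.J_ne_top_of_ne_top ht hv

lemma toReal_le (hu : IsMinimizer A J f t 1 1 u) (hJu : J u ≠ ⊤) (hJv : J v ≠ ⊤) :
    ‖A u - f‖ + max t 0 * (J u).toReal ≤ ‖A v - f‖ + max t 0 * (J v).toReal := by
  rw [← toReal_En_one_one hJu, ← toReal_En_one_one hJv]
  exact ENNReal.toReal_mono (En_one_one_ne_top hJv) (hu v)

lemma norm_sub_le_of_J_le (hu : IsMinimizer A J f t 1 1 u) (hJu : J u ≠ ⊤) (hJ : J v ≤ J u) :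
    ‖A u - f‖ ≤ ‖A v - f‖ := by
  have h : En A J f t 1 1 u ≤ ENNReal.ofReal ‖A v - f‖ + ENNReal.ofReal t * J u :=
    (hu v).trans (by rw [En_one_one]; gcongr)
  rwa [En_one_one, ENNReal.add_le_add_iff_right (ENNReal.mul_ne_top ENNReal.ofReal_ne_top hJu),
    ENNReal.ofReal_le_ofReal_iff (norm_nonneg _)] at h

lemma J_le_of_lt (hu : IsMinimizer A J f s 1 1 u) (hv : IsMinimizer A J f t 1 1 v) (ht : 0 < t)
    (hst : s < t) : J v ≤ J u := by
  rcases eq_or_ne (J u) ⊤ with hJu | hJu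
  · simp [hJu]
  have hJv := hv.J_ne_top_of_ne_top ht hJu
  have huv := hu.toReal_le hJu hJv
  have hvu := hv.toReal_le hJv hJu
  rw [max_eq_left ht.le] at hvu
  have hsum : (t - max s 0) * ((J v).toReal - (J u).toReal) ≤ 0 := by linarith
  rw [← ENNReal.toReal_le_toReal hJv hJu, ← sub_nonpos]
  exact nonpos_of_mul_nonpos_right hsum (sub_pos.mpr (max_lt hst ht))

lemma map_eq_of_J_eq (hu : IsMinimizer A J f t 1 1 u)
    (hv : IsMinimizer A J f t 1 1 v) (ht : 0 < t) (hproper : IsProperFn J) (hconv : EConvexFn J)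
    (hJ : J u = J v) : A u = A v := by
  have hJu := hu.J_ne_top ht hproper
  have hres : ‖A u - f‖ = ‖A v - f‖ :=
    le_antisymm (hu.norm_sub_le_of_J_le hJu hJ.ge) (hv.norm_sub_le_of_J_le (hJ ▸ hJu) hJ.le)
  have hmid : ‖A u - f‖ ≤ ‖midpoint ℝ (A u - f) (A v - f)‖ := by
    have := hu.norm_sub_le_of_J_le hJu
      ((hconv.apply_midpoint_le_max u v).trans_eq (by rw [hJ, max_self]))
    have hA : A (midpoint ℝ u v) - f = midpoint ℝ (A u - f) (A v - f) := by
      simp only [midpoint_eq_smul_add, invOf_eq_inv, map_smul, map_add]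
      module
    rwa [hA] at this
  by_contra hne
  exact (norm_midpoint_lt_of_ne hres (sub_left_injective.ne hne)).not_ge hmid

end IsMinimizer

end Minimizers

theorem forward_solution_ae_unique_general
    {Y : Type*} [NormedAddCommGroup Y] [NormedSpace ℝ Y]
    {H : Type*} [NormedAddCommGroup H] [InnerProductSpace ℝ H]
    (A : (Y →L[ℝ] ℝ) →L[ℝ] H) (J : (Y →L[ℝ] ℝ) → ℝ≥0∞) (f : H)
    (hproper : IsProperFn J) (hconv : EConvexFn J) :
    MeasureTheory.volume {t : ℝ | 0 < t ∧ ∃ u₀ u₁, IsMinimizer A J f t 1 1 u₀ ∧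
      IsMinimizer A J f t 1 1 u₁ ∧ A u₀ ≠ A u₁} = 0 := by
  let minimalJ : ℝ → Set ℝ≥0∞ := fun t => J '' {u | IsMinimizer A J f t 1 1 u}
  have hanti : ∀ a ∈ Ioi (0 : ℝ), ∀ b ∈ Ioi (0 : ℝ), a < b →
      ∀ x ∈ minimalJ a, ∀ y ∈ minimalJ b, y ≤ x := by
    rintro a - b hb hab _ ⟨u, hu, rfl⟩ _ ⟨v, hv, rfl⟩
    exact hu.J_le_of_lt hv hb hab
  refine ((countable_setOf_nontrivial_of_antitone minimalJ hanti).mono ?_).measure_zero _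
  rintro t ⟨ht, u₀, u₁, h₀, h₁, hne⟩
  exact ⟨ht, Set.nontrivial_of_mem_mem_ne (Set.mem_image_of_mem J h₀)
    (Set.mem_image_of_mem J h₁) fun hJ => hne (h₀.map_eq_of_J_eq h₁ ht hproper hconv hJ)⟩

/-- Corollary 2.19.
The forward solution of `E_t^{1,1}(·;f)` is uniquely determined for Lebesgue-almost every
`t > 0`: the set of `t > 0` admitting two minimizers with different forward images has
Lebesgue measure zero. -/
theorem forward_solution_ae_unique
    {Y : Type*} [NormedAddCommGroup Y] [NormedSpace ℝ Y]
    {H : Type*} [NormedAddCommGroup H] [InnerProductSpace ℝ H]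
    (A : (Y →L[ℝ] ℝ) →L[ℝ] H) (J : (Y →L[ℝ] ℝ) → ℝ≥0∞) (f : H)
    (hproper : IsProperFn J) (hconv : EConvexFn J) (hlsc : WeakStarLSC J) (hhom : AbsOneHom J)
    (hdata : ∀ w, A w = f → J w ≠ 0) :
    MeasureTheory.volume {t : ℝ | 0 < t ∧ ∃ u₀ u₁, IsMinimizer A J f t 1 1 u₀ ∧
      IsMinimizer A J f t 1 1 u₁ ∧ A u₀ ≠ A u₁} = 0 :=
  forward_solution_ae_unique_general A J f hproper hconv

end
end

section
/- Suppose the range condition holds. Then for all t > t_* every minimizer u_t of E_t^{α,β}(·;f) satisfies ‖Au_t − f‖_H ≤ t^{1/α} J_min^{β/α}. If moreover the source condition holds and α > 1, then ‖Au_t − f‖_H ≤ t^{1/(α−1)} s_*^{1/(α−1)} J_min^{(β−1)/(α−1)}. -/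
open Filter Topology Set
open scoped ENNReal RealInnerProductSpace

noncomputable section

/-!
Compare a minimizer `u` with the points `(1 - s) • u + s • u†` of the segment towards a
`J`-minimizing solution: the residual scales by `1 - s` and, by convexity, `J` is at most
`(1 - s) J(u) + s J_min`. Since `s = 0` minimizes the resulting real function on `[0, 1]`, its
derivative there is nonnegative, i.e. `‖Au - f‖^α ≤ t J(u)^(β-1) (J_min - J(u))`.
The right-hand side is at most `t J_min^β`. Under the source condition `A* q ∈ ∂J(u†)`,
moreover `J_min - J(u) ≤ ⟨q, f - Au⟩ ≤ ‖q‖ ‖Au - f‖`, and dividing by the residual gives the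
second bound.
-/

theorem nonneg_of_hasDerivAt_of_forall_Ioc_le {F : ℝ → ℝ} {F' a b : ℝ} (hab : a < b)
    (hF : HasDerivAt F F' a) (hmin : ∀ s ∈ Ioc a b, F a ≤ F s) : 0 ≤ F' := by
  have hloc : IsLocalMinOn F (Icc a b) a :=
    eventually_of_mem self_mem_nhdsWithin fun s hs =>
      hs.1.eq_or_lt.elim (fun h => h ▸ le_rfl) fun h => hmin s ⟨h, hs.2⟩
  have hcone : (1 : ℝ) ∈ posTangentConeAt (Icc a b) a :=
    one_mem_posTangentConeAt_iff_frequently.2 <|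
      (eventually_of_mem (Ioc_mem_nhdsGT hab) fun _ hs => Ioc_subset_Icc_self hs).frequently
  simpa using hloc.hasFDerivWithinAt_nonneg hF.hasFDerivAt.hasFDerivWithinAt hcone

theorem hasDerivAt_segment_energy {α β : ℝ} (t R j m : ℝ) (hα : α ≠ 0) (hβ : 1 ≤ β) :
    HasDerivAt (fun s => 1 / α * ((1 - s) ^ α * R ^ α) + t / β * ((1 - s) * j + s * m) ^ β)
      (-R ^ α + t * j ^ (β - 1) * (m - j)) 0 := by
  have hres : HasDerivAt (fun s : ℝ => (1 - s) ^ α) (-1 * α * (1 - 0) ^ (α - 1)) 0 :=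
    ((hasDerivAt_id 0).const_sub 1).rpow_const (by simp)
  have hreg : HasDerivAt (fun s : ℝ => ((1 - s) * j + s * m) ^ β)
      ((-1 * j + 1 * m) * β * ((1 - 0) * j + 0 * m) ^ (β - 1)) 0 :=
    ((((hasDerivAt_id 0).const_sub 1).mul_const j).add
      ((hasDerivAt_id 0).mul_const m)).rpow_const (Or.inr hβ)
  refine (((hres.mul_const (R ^ α)).const_mul (1 / α)).fun_add
    (hreg.const_mul (t / β))).congr_deriv ?_
  have hβ0 : β ≠ 0 := by linarith
  simp only [sub_zero, Real.one_rpow, zero_mul, add_zero]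
  field_simp
  ring

theorem rpow_sub_one_mul_sub_le {x m c β : ℝ} (hx : 0 ≤ x) (hm : 0 ≤ m) (hβ : 1 ≤ β)
    (hc : m - x ≤ c) (hc0 : 0 ≤ c) : x ^ (β - 1) * (m - x) ≤ m ^ (β - 1) * c := by
  rcases le_or_gt x m with hxm | hmx
  · exact mul_le_mul (Real.rpow_le_rpow hx hxm (by linarith)) hc (by linarith)
      (Real.rpow_nonneg hm _)
  · exact (mul_nonpos_of_nonneg_of_nonpos (Real.rpow_nonneg hx _) (by linarith)).trans
      (mul_nonneg (Real.rpow_nonneg hm _) hc0)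

theorem le_rpow_mul_rpow_of_rpow_le {R p a m q : ℝ} (hR : 0 ≤ R) (hp : 0 < p) (ha : 0 ≤ a)
    (hm : 0 ≤ m) (h : R ^ p ≤ a * m ^ q) : R ≤ a ^ (1 / p) * m ^ (q / p) := by
  rw [one_div, div_eq_mul_inv, Real.rpow_mul hm, ← Real.mul_rpow ha (Real.rpow_nonneg hm _)]
  exact (Real.le_rpow_inv_iff_of_pos hR (by positivity) hp).2 h

section Energy

variable {X : Type*} [NormedAddCommGroup X] [NormedSpace ℝ X]
  {H : Type*} [NormedAddCommGroup H] [InnerProductSpace ℝ H]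
  {A : X →L[ℝ] H} {J : X → ℝ≥0∞} {f : H} {t α β m : ℝ} {u v w : X}

theorem En_le_ofReal {j : ℝ} (hα : 0 ≤ α) (ht : 0 ≤ t) (hβ : 0 < β) (hj : 0 ≤ j)
    (hJ : J u ≤ ENNReal.ofReal j) :
    En A J f t α β u ≤ ENNReal.ofReal (1 / α * ‖A u - f‖ ^ α + t / β * j ^ β) := by
  rw [ENNReal.ofReal_add (by positivity) (by positivity),
    ENNReal.ofReal_mul (div_nonneg ht hβ.le),
    ← ENNReal.ofReal_rpow_of_nonneg hj hβ.le]
  unfold En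
  gcongr

theorem En_eq_ofReal (hα : 0 ≤ α) (ht : 0 ≤ t) (hβ : 0 < β) (hJ : J u ≠ ⊤) :
    En A J f t α β u =
      ENNReal.ofReal (1 / α * ‖A u - f‖ ^ α + t / β * (J u).toReal ^ β) := by
  rw [ENNReal.ofReal_add (by positivity) (by positivity),
    ENNReal.ofReal_mul (div_nonneg ht hβ.le),
    ← ENNReal.ofReal_rpow_of_nonneg ENNReal.toReal_nonneg hβ.le, ENNReal.ofReal_toReal hJ]
  rfl

theorem IsMinimizer.apply_ne_top (hu : IsMinimizer A J f t α β u) (ht : 0 < t)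
    (hβ : 0 < β) (hv : J v ≠ ⊤) : J u ≠ ⊤ := by
  intro hJu
  have hEv : En A J f t α β v ≠ ⊤ :=
    ENNReal.add_ne_top.2 ⟨ENNReal.ofReal_ne_top,
      ENNReal.mul_ne_top ENNReal.ofReal_ne_top (ENNReal.rpow_ne_top_of_nonneg hβ.le hv)⟩
  have hEu : En A J f t α β u = ⊤ := by
    rw [En, hJu, ENNReal.top_rpow_of_pos hβ,
      ENNReal.mul_top (ENNReal.ofReal_pos.2 (div_pos ht hβ)).ne', add_top]
  exact hEv (top_le_iff.1 (hEu ▸ hu v))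

theorem IsMinimizer.residual_rpow_le (hu : IsMinimizer A J f t α β u)
    (hconv : EConvexFn J) (hα : 0 < α) (hβ : 1 ≤ β) (ht : 0 < t)
    (hAw : A w = f) (hm : 0 ≤ m) (hJw : J w = ENNReal.ofReal m) :
    ‖A u - f‖ ^ α ≤ t * (J u).toReal ^ (β - 1) * (m - (J u).toReal) := by
  have hβ0 : 0 < β := by linarith
  have hJu : J u ≠ ⊤ := hu.apply_ne_top ht hβ0 (hJw ▸ ENNReal.ofReal_ne_top)
  set R := ‖A u - f‖
  set j := (J u).toReal
  have hj : 0 ≤ j := ENNReal.toReal_nonneg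
  suffices hmin : ∀ s ∈ Ioc (0 : ℝ) 1, 1 / α * R ^ α + t / β * j ^ β
      ≤ 1 / α * ((1 - s) ^ α * R ^ α) + t / β * ((1 - s) * j + s * m) ^ β by
    have := nonneg_of_hasDerivAt_of_forall_Ioc_le one_pos
      (hasDerivAt_segment_energy t R j m hα.ne' hβ) (by simpa using hmin)
    linarith
  rintro s ⟨hs0, hs1⟩
  have h1s : 0 ≤ 1 - s := by linarith
  have hres : ‖A ((1 - s) • u + s • w) - f‖ = (1 - s) * R := by
    rw [map_add, map_smul, map_smul, hAw, ← norm_smul_of_nonneg h1s]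
    congr 1
    module
  have hJs : J ((1 - s) • u + s • w) ≤ ENNReal.ofReal ((1 - s) * j + s * m) := by
    refine (hconv u w _ _ h1s hs0.le (by ring)).trans_eq ?_
    rw [hJw, ← ENNReal.ofReal_toReal hJu, ← ENNReal.ofReal_mul h1s, ← ENNReal.ofReal_mul hs0.le,
      ← ENNReal.ofReal_add (by positivity) (by positivity)]
  have hE := (En_eq_ofReal hα.le ht.le hβ0 hJu).symm.trans_le
    ((hu _).trans (En_le_ofReal hα.le ht.le hβ0 (by positivity) hJs))
  rw [hres, Real.mul_rpow h1s (norm_nonneg _),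
    ENNReal.ofReal_le_ofReal_iff (by positivity)] at hE
  exact hE

theorem toReal_add_le_of_mem_subdiff {p : X →L[ℝ] ℝ} (hp : p ∈ subdiff J w)
    (hw : J w ≠ ⊤) (hv : J v ≠ ⊤) : (J w).toReal + p (v - w) ≤ (J v).toReal := by
  have h := hp v
  rw [← EReal.coe_ennreal_toReal hw, ← EReal.coe_ennreal_toReal hv, ← EReal.coe_add] at h
  exact EReal.coe_le_coe_iff.1 h

theorem sourceNorms_nonneg {r : ℝ} (hr : r ∈ SourceNorms A J f) : 0 ≤ r := by
  obtain ⟨-, q, -, -, -, rfl⟩ := hr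
  exact norm_nonneg q

theorem sInf_sourceNorms_nonneg : 0 ≤ sInf (SourceNorms A J f) :=
  Real.sInf_nonneg fun _ => sourceNorms_nonneg

theorem sub_toReal_le_sInf_sourceNorms_mul (hJmin : ∀ v, A v = f → J w ≤ J v)
    (hJw : J w = ENNReal.ofReal m) (hJu : J u ≠ ⊤) (hS : (SourceNorms A J f).Nonempty) :
    m - (J u).toReal ≤ sInf (SourceNorms A J f) * ‖A u - f‖ := by
  have hbound : ∀ r ∈ SourceNorms A J f, m - (J u).toReal ≤ ‖A u - f‖ * r := by
    rintro _ ⟨v, q, hJv, hAv, hq, rfl⟩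
    have hsub := toReal_add_le_of_mem_subdiff hq hJv hJu
    have hmv : m ≤ (J v).toReal := (le_max_left m 0).trans <| by
      rw [← ENNReal.toReal_ofReal', ← hJw]
      exact ENNReal.toReal_mono hJv (hJmin v hAv)
    have hinner : (Astar A q) (u - v) = ⟪q, A u - f⟫ := by
      simp [Astar, hAv, inner_sub_right]
    have := neg_le_of_abs_le (abs_real_inner_le_norm q (A u - f))
    linarith
  rw [mul_comm, ← smul_eq_mul, ← Real.sInf_smul_of_nonneg (norm_nonneg _)]
  exact le_csInf hS.smul_set (by rintro _ ⟨r, hr, rfl⟩; exact hbound r hr)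

theorem IsMinimizer.residual_le (hu : IsMinimizer A J f t α β u) (hconv : EConvexFn J)
    (hα : 0 < α) (hβ : 1 ≤ β) (ht : 0 < t) (hAw : A w = f) (hm : 0 ≤ m)
    (hJw : J w = ENNReal.ofReal m) :
    ‖A u - f‖ ≤ t ^ (1 / α) * m ^ (β / α) := by
  refine le_rpow_mul_rpow_of_rpow_le (norm_nonneg _) hα ht.le hm
    ((hu.residual_rpow_le hconv hα hβ ht hAw hm hJw).trans ?_)
  rw [mul_assoc, ← sub_add_cancel β 1, Real.rpow_add' hm (by linarith), Real.rpow_one,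
    add_sub_cancel_right]
  exact mul_le_mul_of_nonneg_left (rpow_sub_one_mul_sub_le ENNReal.toReal_nonneg hm hβ
    (by linarith [(J u).toReal_nonneg]) hm) ht.le

theorem IsMinimizer.residual_le_of_source (hu : IsMinimizer A J f t α β u)
    (hconv : EConvexFn J) (hα : 1 < α) (hβ : 1 ≤ β) (ht : 0 < t) (hAw : A w = f)
    (hJmin : ∀ v, A v = f → J w ≤ J v) (hm : 0 ≤ m) (hJw : J w = ENNReal.ofReal m)
    (hS : (SourceNorms A J f).Nonempty) :
    ‖A u - f‖ ≤ t ^ (1 / (α - 1)) * sInf (SourceNorms A J f) ^ (1 / (α - 1)) *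
      m ^ ((β - 1) / (α - 1)) := by
  have hJu : J u ≠ ⊤ := hu.apply_ne_top ht (by linarith) (hJw ▸ ENNReal.ofReal_ne_top)
  set R := ‖A u - f‖
  set s := sInf (SourceNorms A J f)
  have hs : 0 ≤ s := sInf_sourceNorms_nonneg
  have hkey : R ^ α ≤ t * m ^ (β - 1) * (s * R) := by
    refine (hu.residual_rpow_le hconv (by linarith) hβ ht hAw hm hJw).trans ?_
    rw [mul_assoc, mul_assoc t]
    exact mul_le_mul_of_nonneg_left (rpow_sub_one_mul_sub_le ENNReal.toReal_nonneg hm hβ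
      (sub_toReal_le_sInf_sourceNorms_mul hJmin hJw hJu hS) (by positivity)) ht.le
  rcases (show 0 ≤ R from norm_nonneg _).eq_or_lt with hR | hR
  · rw [← hR]
    positivity
  have hpow : R ^ (α - 1) ≤ (t * s) * m ^ (β - 1) := by
    rw [Real.rpow_sub_one hR.ne', div_le_iff₀ hR]
    linarith
  rw [← Real.mul_rpow ht.le hs]
  exact le_rpow_mul_rpow_of_rpow_le hR.le (by linarith) (by positivity) hm hpow

end Energy

theorem residual_bounds_general
    {Y : Type*} [NormedAddCommGroup Y] [NormedSpace ℝ Y]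
    {H : Type*} [NormedAddCommGroup H] [InnerProductSpace ℝ H]
    (A : (Y →L[ℝ] ℝ) →L[ℝ] H) (J : (Y →L[ℝ] ℝ) → ℝ≥0∞) (f : H)
    (hconv : EConvexFn J)
    (α β : ℝ) (hα : 1 ≤ α) (hβ : 1 ≤ β)
    (udag : Y →L[ℝ] ℝ) (hRC2 : A udag = f)
    (hJminimizing : ∀ w, A w = f → J udag ≤ J w)
    (Jmin : ℝ) (hJminpos : 0 < Jmin) (hJmin : J udag = ENNReal.ofReal Jmin) :
    ((α = 1 ∧ (SourceNorms A J f).Nonempty) →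
      ∀ t : ℝ, Jmin ^ ((1:ℝ) - β) / sInf (SourceNorms A J f) < t →
        ∀ u, IsMinimizer A J f t α β u →
          ‖A u - f‖ ≤ t ^ (1 / α) * Jmin ^ (β / α)) ∧
    (¬(α = 1 ∧ (SourceNorms A J f).Nonempty) →
      ∀ t : ℝ, 0 < t → ∀ u, IsMinimizer A J f t α β u →
        ‖A u - f‖ ≤ t ^ (1 / α) * Jmin ^ (β / α)) ∧
    ((SourceNorms A J f).Nonempty → 1 < α →
      ∀ t : ℝ, 0 < t → ∀ u, IsMinimizer A J f t α β u →
        ‖A u - f‖ ≤ t ^ (1 / (α - 1)) * sInf (SourceNorms A J f) ^ (1 / (α - 1)) *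
          Jmin ^ ((β - 1) / (α - 1))) := by
  have hα0 : 0 < α := by linarith
  refine ⟨fun _ t ht u hu => ?_, fun _ t ht u hu => ?_, fun hS hα1 t ht u hu => ?_⟩
  · have ht₀ : 0 < t := lt_of_le_of_lt (div_nonneg (Real.rpow_nonneg hJminpos.le _)
      sInf_sourceNorms_nonneg) ht
    exact hu.residual_le hconv hα0 hβ ht₀ hRC2 hJminpos.le hJmin
  · exact hu.residual_le hconv hα0 hβ ht hRC2 hJminpos.le hJmin
  · exact hu.residual_le_of_source hconv hα1 hβ ht hRC2 hJminimizing hJminpos.le hJmin hS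

/-- Residual bounds, Lemma 3.2.
Suppose the range condition holds, with `J_min` the value of `J` at a `J`-minimizing
solution `u†`. Then for all `t > t_*` (where `t_* = J_min^{1−β}/s_*` if `α = 1` and the
source condition holds, and `t_* = 0` otherwise) every minimizer `u_t` of
`E_t^{α,β}(·;f)` satisfies `‖Au_t − f‖ ≤ t^{1/α} J_min^{β/α}`. If moreover the source
condition holds and `α > 1`, then
`‖Au_t − f‖ ≤ t^{1/(α−1)} s_*^{1/(α−1)} J_min^{(β−1)/(α−1)}`. -/
theorem residual_bounds
    {Y : Type*} [NormedAddCommGroup Y] [NormedSpace ℝ Y]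
    {H : Type*} [NormedAddCommGroup H] [InnerProductSpace ℝ H]
    (A : (Y →L[ℝ] ℝ) →L[ℝ] H) (J : (Y →L[ℝ] ℝ) → ℝ≥0∞) (f : H)
    (hproper : IsProperFn J) (hconv : EConvexFn J) (hlsc : WeakStarLSC J) (hhom : AbsOneHom J)
    (hdata : ∀ w, A w = f → J w ≠ 0)
    (α β : ℝ) (hα : 1 ≤ α) (hβ : 1 ≤ β)
    (udag : Y →L[ℝ] ℝ) (hRC1 : J udag ≠ ⊤) (hRC2 : A udag = f)
    (hJminimizing : ∀ w, A w = f → J udag ≤ J w)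
    (Jmin : ℝ) (hJminpos : 0 < Jmin) (hJmin : J udag = ENNReal.ofReal Jmin) :
    ((α = 1 ∧ (SourceNorms A J f).Nonempty) →
      ∀ t : ℝ, Jmin ^ ((1:ℝ) - β) / sInf (SourceNorms A J f) < t →
        ∀ u, IsMinimizer A J f t α β u →
          ‖A u - f‖ ≤ t ^ (1 / α) * Jmin ^ (β / α)) ∧
    (¬(α = 1 ∧ (SourceNorms A J f).Nonempty) →
      ∀ t : ℝ, 0 < t → ∀ u, IsMinimizer A J f t α β u →
        ‖A u - f‖ ≤ t ^ (1 / α) * Jmin ^ (β / α)) ∧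
    ((SourceNorms A J f).Nonempty → 1 < α →
      ∀ t : ℝ, 0 < t → ∀ u, IsMinimizer A J f t α β u →
        ‖A u - f‖ ≤ t ^ (1 / (α - 1)) * sInf (SourceNorms A J f) ^ (1 / (α - 1)) *
          Jmin ^ ((β - 1) / (α - 1))) :=
  residual_bounds_general A J f hconv α β hα hβ udag hRC2 hJminimizing Jmin hJminpos hJmin
end
end
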